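/- arXiv:2405.09937 — 5 statements merged into one kernel-verified Lean document; each statement's English description precedes it below -/
import Mathlib

section
/- Let θ ∈ (0,1), C > 0 and N₀ > 0. Let L, H, N : [0,∞) → [0,∞) with L differentiable, and suppose that for every t ≥ 0: (i) L'(t) + H(t) ≤ 0; (ii) N(t) ≤ N₀; (iii) L(t) ≤ C·H(t)^θ·N(t)^{1−θ}. Then, setting c₀ := C^{−1/θ}·N₀^{1−1/θ}, one has for every t ≥ 0: L(t) ≤ L(0)·(1 + ((1−θ)/θ)·c₀·L(0)^{(1−θ)/θ}·t)^{−θ/(1−θ)}. -/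
/-!
Bounding `N` by `N₀` in the interpolation inequality and solving for `H` gives
`H ≥ c₀ L^(1/θ)`, so with `α = (1 - θ)/θ` the dissipation law becomes the differential
inequality `L' ≤ -c₀ L^(1+α)`. Along it `L^(-α)` grows at least linearly with slope `α c₀`,
which is the claimed algebraic decay once inverted.
-/

open Set Real

lemma mul_rpow_one_div_le_of_le_mul_rpow {θ K l h : ℝ} (hθ : 0 < θ) (hK : 0 < K) (hl : 0 ≤ l)
    (hh : 0 ≤ h) (hlh : l ≤ K * h ^ θ) : K ^ (-(1 / θ)) * l ^ (1 / θ) ≤ h := calc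
  K ^ (-(1 / θ)) * l ^ (1 / θ) = (l / K) ^ (1 / θ) := by
    rw [div_rpow hl hK.le, rpow_neg hK.le, inv_mul_eq_div]
  _ ≤ (h ^ θ) ^ (1 / θ) := by
    gcongr
    rwa [div_le_iff₀' hK]
  _ = h := by rw [← rpow_mul hh, mul_one_div_cancel hθ.ne', rpow_one]

lemma mul_rpow_one_div_le_of_le_mul_rpow_mul_rpow {θ C N₀ l h n : ℝ} (hθ0 : 0 < θ) (hθ1 : θ ≤ 1)
    (hC : 0 < C) (hN₀ : 0 < N₀) (hl : 0 ≤ l) (hh : 0 ≤ h) (hn : 0 ≤ n) (hnN₀ : n ≤ N₀)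
    (hlhn : l ≤ C * h ^ θ * n ^ (1 - θ)) :
    C ^ (-(1 / θ)) * N₀ ^ (1 - 1 / θ) * l ^ (1 / θ) ≤ h := by
  have hK : 0 < C * N₀ ^ (1 - θ) := by positivity
  have hrate : C ^ (-(1 / θ)) * N₀ ^ (1 - 1 / θ) = (C * N₀ ^ (1 - θ)) ^ (-(1 / θ)) := by
    rw [mul_rpow hC.le (by positivity), ← rpow_mul hN₀.le]
    congr 2
    field_simp
    ring
  rw [hrate]
  refine mul_rpow_one_div_le_of_le_mul_rpow hθ0 hK hl hh (hlhn.trans ?_)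
  rw [mul_right_comm]
  gcongr

lemma mul_sub_le_rpow_neg_sub_of_deriv_le {L : ℝ → ℝ} {α c a b : ℝ} (hα : 0 ≤ α)
    (hL : Differentiable ℝ L) (hpos : ∀ s ∈ Icc a b, 0 < L s)
    (hderiv : ∀ s ∈ Ioo a b, deriv L s ≤ -(c * L s ^ (1 + α))) (hab : a ≤ b) :
    α * c * (b - a) ≤ L b ^ (-α) - L a ^ (-α) := by
  have hasDeriv : ∀ s ∈ Ioo a b,
      HasDerivAt (fun s => L s ^ (-α)) (deriv L s * (-α) * L s ^ (-α - 1)) s := fun s hs =>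
    (hL s).hasDerivAt.rpow_const (Or.inl (hpos s (Ioo_subset_Icc_self hs)).ne')
  refine (convex_Icc a b).mul_sub_le_image_sub_of_le_deriv
    (hL.continuous.continuousOn.rpow_const fun s hs => Or.inl (hpos s hs).ne') ?_ ?_
    a (left_mem_Icc.2 hab) b (right_mem_Icc.2 hab) hab
  · rw [interior_Icc]
    exact fun s hs => (hasDeriv s hs).differentiableAt.differentiableWithinAt
  · rw [interior_Icc]
    intro s hs
    have hLs := hpos s (Ioo_subset_Icc_self hs)
    rw [(hasDeriv s hs).deriv]
    calc α * c = α * c * L s ^ (1 + α) * L s ^ (-α - 1) := by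
          rw [mul_assoc, ← rpow_add hLs, show 1 + α + (-α - 1) = 0 by ring, rpow_zero, mul_one]
      _ ≤ deriv L s * (-α) * L s ^ (-α - 1) := by
          refine mul_le_mul_of_nonneg_right ?_ (rpow_pos_of_pos hLs _).le
          nlinarith [mul_le_mul_of_nonneg_left (hderiv s hs) hα]

lemma le_mul_one_add_mul_rpow_rpow_neg_inv {α x y k : ℝ} (hα : 0 < α) (hx : 0 < x) (hy : 0 < y)
    (hk : 0 ≤ k) (hxy : x ^ (-α) + k ≤ y ^ (-α)) : y ≤ x * (1 + k * x ^ α) ^ (-α⁻¹) := by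
  have hsplit : x ^ (-α) + k = x ^ (-α) * (1 + k * x ^ α) := by
    rw [mul_add, mul_one, mul_left_comm, ← rpow_add hx, neg_add_cancel, rpow_zero, mul_one]
  have hinv : ∀ z : ℝ, 0 < z → (z ^ (-α)) ^ (-α⁻¹) = z := fun z hz => by
    rw [← rpow_mul hz.le, neg_mul_neg, mul_inv_cancel₀ hα.ne', rpow_one]
  calc y = (y ^ (-α)) ^ (-α⁻¹) := (hinv y hy).symm
    _ ≤ (x ^ (-α) + k) ^ (-α⁻¹) :=
        rpow_le_rpow_of_nonpos (by positivity) hxy (by simpa using hα.le)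
    _ = x * (1 + k * x ^ α) ^ (-α⁻¹) := by
        rw [hsplit, mul_rpow (by positivity) (by positivity), hinv x hx]

theorem le_mul_one_add_rpow_neg_inv_of_deriv_le {L : ℝ → ℝ} {α c t : ℝ} (hα : 0 < α)
    (hc : 0 ≤ c) (hL : Differentiable ℝ L) (hLnn : ∀ s, 0 ≤ s → 0 ≤ L s)
    (hderiv : ∀ s, 0 ≤ s → deriv L s ≤ -(c * L s ^ (1 + α))) (ht : 0 ≤ t) :
    L t ≤ L 0 * (1 + α * c * L 0 ^ α * t) ^ (-α⁻¹) := by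
  have hL0 := hLnn 0 le_rfl
  rcases (hLnn t ht).eq_or_lt with hLt | hLt
  · rw [← hLt]
    positivity
  have hanti : AntitoneOn L (Ici 0) := by
    refine antitoneOn_of_deriv_nonpos (convex_Ici 0) hL.continuous.continuousOn
      hL.differentiableOn fun s hs => ?_
    rw [interior_Ici] at hs
    nlinarith [hderiv s hs.le, rpow_nonneg (hLnn s hs.le) (1 + α)]
  have hpos : ∀ s ∈ Icc 0 t, 0 < L s := fun s hs =>
    hLt.trans_le (hanti hs.1 ht hs.2)
  have hgrowth := mul_sub_le_rpow_neg_sub_of_deriv_le hα.le hL hpos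
    (fun s hs => hderiv s hs.1.le) ht
  convert le_mul_one_add_mul_rpow_rpow_neg_inv hα (hpos 0 ⟨le_rfl, ht⟩) hLt (k := α * c * t)
    (by positivity) (by linarith) using 3
  ring

/-- Nash-type decay mechanism: a differentiable Lyapunov functional `L` with dissipation
rate `H`, a lower-order functional `N` bounded by `N₀`, and the interpolation inequality
`L ≤ C·H^θ·N^(1-θ)` imply the algebraic decay of `L`. -/
theorem stmt0 (θ C N₀ : ℝ) (hθ : θ ∈ Set.Ioo (0 : ℝ) 1) (hC : 0 < C) (hN₀ : 0 < N₀)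
    (L H N : ℝ → ℝ) (hLdiff : Differentiable ℝ L)
    (hLnn : ∀ t, 0 ≤ t → 0 ≤ L t) (hHnn : ∀ t, 0 ≤ t → 0 ≤ H t)
    (hNnn : ∀ t, 0 ≤ t → 0 ≤ N t)
    (hdiss : ∀ t, 0 ≤ t → deriv L t + H t ≤ 0)
    (hNbound : ∀ t, 0 ≤ t → N t ≤ N₀)
    (hinterp : ∀ t, 0 ≤ t → L t ≤ C * H t ^ θ * N t ^ (1 - θ)) :
    ∀ t, 0 ≤ t →
      L t ≤ L 0 *
        (1 + (1 - θ) / θ * (C ^ (-(1 / θ)) * N₀ ^ (1 - 1 / θ)) * L 0 ^ ((1 - θ) / θ) * t)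
          ^ (-(θ / (1 - θ))) := by
  obtain ⟨hθ0, hθ1⟩ := hθ
  intro t ht
  have hexp : 1 / θ = 1 + (1 - θ) / θ := by field_simp; ring
  have hderiv : ∀ s, 0 ≤ s →
      deriv L s ≤ -(C ^ (-(1 / θ)) * N₀ ^ (1 - 1 / θ) * L s ^ (1 + (1 - θ) / θ)) := by
    intro s hs
    have hH := mul_rpow_one_div_le_of_le_mul_rpow_mul_rpow hθ0 hθ1.le hC hN₀ (hLnn s hs)
      (hHnn s hs) (hNnn s hs) (hNbound s hs) (hinterp s hs)
    rw [← hexp]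
    linarith [hdiss s hs]
  rw [show θ / (1 - θ) = ((1 - θ) / θ)⁻¹ from (inv_div _ _).symm]
  exact le_mul_one_add_rpow_neg_inv_of_deriv_le (div_pos (by linarith) hθ0) (by positivity)
    hLdiff hLnn hderiv ht
end

section
/- There exists a constant C > 0 with the following property: for every measurable f : ℝ³×ℝ³ → [0,∞) such that ∫∫ f(x,v)(1+‖v‖²) dv dx < ∞ and the function x ↦ ∫ f(x,v) dv is essentially bounded, and for every continuously differentiable u : ℝ³ → ℝ³ with compact support, one has ∫_{ℝ³}∫_{ℝ³} f(x,v)·‖u(x) − v‖² dv dx ≥ (1/2)·∫_{ℝ³}∫_{ℝ³} f(x,v)·‖v‖² dv dx − C·(∫∫ f dv dx)^{2/3}·(ess sup_x ∫ f(x,v) dv)^{1/3}·∫_{ℝ³} ‖∇u(x)‖² dx. -/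
/-
Since `‖v‖² ≤ 2‖u(x)‖² + 2‖u(x) - v‖²`, integrating against `f` gives
`½ ∫∫ f ‖v‖² - ∫ ρ ‖u‖² ≤ ∫∫ f ‖u - v‖²` with `ρ = ∫ f dv`. The error term is bounded by
Hölder with exponents `3/2` and `3`: `∫ ρ ‖u‖² ≤ ‖ρ‖_{3/2} ‖u‖_6²`. Writing
`ρ^{3/2} ≤ ‖ρ‖_∞^{1/2} ρ` gives `‖ρ‖_{3/2} ≤ ‖ρ‖_∞^{1/3} ‖ρ‖_1^{2/3}`, and the
Gagliardo–Nirenberg–Sobolev inequality gives `‖u‖_6 ≤ K ‖∇u‖_2`.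
-/

open MeasureTheory

noncomputable section

abbrev E3 := EuclideanSpace ℝ (Fin 3)

open scoped ENNReal NNReal

section Interpolation

variable {α : Type*} [MeasurableSpace α] {μ : Measure α}

theorem lintegral_rpow_le_essSup_rpow_mul_lintegral {g : α → ℝ≥0∞} (hg : AEMeasurable g μ)
    {a : ℝ} (ha : 0 ≤ a) :
    ∫⁻ x, g x ^ (1 + a) ∂μ ≤ essSup g μ ^ a * ∫⁻ x, g x ∂μ := by
  rw [← lintegral_const_mul'' _ hg]
  refine lintegral_mono_ae ?_
  filter_upwards [ae_le_essSup (f := g)] with x hx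
  rw [ENNReal.rpow_add_of_nonneg _ _ zero_le_one ha, ENNReal.rpow_one, mul_comm]
  gcongr

theorem lintegral_mul_le_essSup_mul_L1_mul_Lq {p q : ℝ} (hpq : p.HolderConjugate q)
    {g w : α → ℝ≥0∞} (hg : AEMeasurable g μ) (hw : AEMeasurable w μ) :
    ∫⁻ x, g x * w x ∂μ ≤
      essSup g μ ^ (1 / q) * (∫⁻ x, g x ∂μ) ^ (1 / p) * (∫⁻ x, w x ^ q ∂μ) ^ (1 / q) := by
  have hinterp :
      (∫⁻ x, g x ^ p ∂μ) ^ (1 / p) ≤ essSup g μ ^ (1 / q) * (∫⁻ x, g x ∂μ) ^ (1 / p) := by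
    have h := lintegral_rpow_le_essSup_rpow_mul_lintegral hg hpq.sub_one_pos.le
    rw [add_sub_cancel] at h
    calc (∫⁻ x, g x ^ p ∂μ) ^ (1 / p)
        ≤ (essSup g μ ^ (p - 1) * ∫⁻ x, g x ∂μ) ^ (1 / p) := by
          gcongr; exact one_div_nonneg.mpr hpq.nonneg
      _ = _ := by
        rw [ENNReal.mul_rpow_of_nonneg _ _ (by have := hpq.pos; positivity), ← ENNReal.rpow_mul]
        congr 2
        rw [one_div, one_div, ← hpq.one_sub_inv]
        field_simp [hpq.ne_zero]
  calc ∫⁻ x, g x * w x ∂μ ≤ (∫⁻ x, g x ^ p ∂μ) ^ (1 / p) * (∫⁻ x, w x ^ q ∂μ) ^ (1 / q) :=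
        ENNReal.lintegral_mul_le_Lp_mul_Lq μ hpq hg hw
    _ ≤ _ := by gcongr

end Interpolation

theorem ofReal_norm_sq_eq_enorm_sq {G : Type*} [SeminormedAddCommGroup G] (y : G) :
    ENNReal.ofReal (‖y‖ ^ 2) = ‖y‖ₑ ^ 2 := by
  rw [ENNReal.ofReal_pow (norm_nonneg _), ofReal_norm]

section Sobolev

variable {E : Type*} [NormedAddCommGroup E] [NormedSpace ℝ E] [MeasurableSpace E] [BorelSpace E]
  [FiniteDimensional ℝ E] (μ : Measure E) [μ.IsAddHaarMeasure]
  {F : Type*} [NormedAddCommGroup F] [InnerProductSpace ℝ F]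

theorem eLpNorm_six_le_eLpNorm_fderiv_two (hE : Module.finrank ℝ E = 3) {u : E → F}
    (hu : ContDiff ℝ 1 u) (h2u : HasCompactSupport u) :
    eLpNorm u 6 μ ≤ eLpNormLESNormFDerivOfEqInnerConst μ 2 * eLpNorm (fderiv ℝ u) 2 μ :=
  eLpNorm_le_eLpNorm_fderiv_of_eq_inner μ hu h2u (p := 2) (p' := 6) (by norm_num)
    (by rw [hE]; norm_num) (by rw [hE]; norm_num)

theorem lintegral_mul_enorm_sq_le (hE : Module.finrank ℝ E = 3) {g : E → ℝ≥0∞}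
    (hg : AEMeasurable g μ) {u : E → F} (hu : ContDiff ℝ 1 u) (h2u : HasCompactSupport u) :
    ∫⁻ x, g x * ‖u x‖ₑ ^ 2 ∂μ ≤
      (eLpNormLESNormFDerivOfEqInnerConst μ 2 : ℝ≥0∞) ^ 2 * (∫⁻ x, g x ∂μ) ^ (2 / 3 : ℝ) *
        essSup g μ ^ (1 / 3 : ℝ) * ∫⁻ x, ‖fderiv ℝ u x‖ₑ ^ 2 ∂μ := by
  have hpq : (3 / 2 : ℝ).HolderConjugate 3 := by
    rw [Real.holderConjugate_iff]; norm_num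
  have hL6 : (∫⁻ x, (‖u x‖ₑ ^ 2) ^ (3 : ℝ) ∂μ) ^ (1 / 3 : ℝ) = eLpNorm u 6 μ ^ 2 := by
    have hpow : ∀ x, (‖u x‖ₑ ^ 2) ^ (3 : ℝ) = ‖u x‖ₑ ^ ((6 : ℝ≥0) : ℝ) := fun x => by
      rw [← ENNReal.rpow_natCast, ← ENNReal.rpow_mul]; norm_num
    rw [lintegral_congr hpow, ← eLpNorm_nnreal_pow_eq_lintegral (by norm_num), ← ENNReal.rpow_mul,
      ← ENNReal.rpow_natCast]
    norm_num
  have hL2 : eLpNorm (fderiv ℝ u) 2 μ ^ 2 = ∫⁻ x, ‖fderiv ℝ u x‖ₑ ^ 2 ∂μ := by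
    simpa using eLpNorm_nnreal_pow_eq_lintegral (μ := μ) (f := fderiv ℝ u) (p := 2) (by norm_num)
  calc ∫⁻ x, g x * ‖u x‖ₑ ^ 2 ∂μ
      ≤ essSup g μ ^ (1 / 3 : ℝ) * (∫⁻ x, g x ∂μ) ^ (1 / (3 / 2) : ℝ) *
          (∫⁻ x, (‖u x‖ₑ ^ 2) ^ (3 : ℝ) ∂μ) ^ (1 / 3 : ℝ) :=
        lintegral_mul_le_essSup_mul_L1_mul_Lq hpq hg
          (hu.continuous.enorm.measurable.pow_const 2).aemeasurable
    _ ≤ essSup g μ ^ (1 / 3 : ℝ) * (∫⁻ x, g x ∂μ) ^ (2 / 3 : ℝ) *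
          (eLpNormLESNormFDerivOfEqInnerConst μ 2 * eLpNorm (fderiv ℝ u) 2 μ) ^ 2 := by
      rw [hL6, show (1 / (3 / 2) : ℝ) = 2 / 3 by norm_num]
      gcongr
      exact eLpNorm_six_le_eLpNorm_fderiv_two μ hE hu h2u
    _ = _ := by rw [mul_pow, hL2]; ring

theorem integral_mul_norm_sq_le (hE : Module.finrank ℝ E = 3) {ρ : E → ℝ} (hρ0 : 0 ≤ᵐ[μ] ρ)
    (hρ : Integrable ρ μ) (hS : essSup (fun x => ENNReal.ofReal (ρ x)) μ ≠ ⊤) {u : E → F}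
    (hu : ContDiff ℝ 1 u) (h2u : HasCompactSupport u) :
    ∫ x, ρ x * ‖u x‖ ^ 2 ∂μ ≤
      (eLpNormLESNormFDerivOfEqInnerConst μ 2 : ℝ) ^ 2 * (∫ x, ρ x ∂μ) ^ (2 / 3 : ℝ) *
        (essSup (fun x => ENNReal.ofReal (ρ x)) μ).toReal ^ (1 / 3 : ℝ) *
          ∫ x, ‖fderiv ℝ u x‖ ^ 2 ∂μ := by
  have hDu : Integrable (fun x => ‖fderiv ℝ u x‖ ^ 2) μ :=
    ((hu.continuous_fderiv one_ne_zero).memLp_of_hasCompactSupport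
      (h2u.fderiv (𝕜 := ℝ))).integrable_norm_pow two_ne_zero
  have hLHS : ∫ x, ρ x * ‖u x‖ ^ 2 ∂μ = (∫⁻ x, ENNReal.ofReal (ρ x) * ‖u x‖ₑ ^ 2 ∂μ).toReal := by
    rw [integral_eq_lintegral_of_nonneg_ae (f := fun x => ρ x * ‖u x‖ ^ 2)
      (hρ0.mono fun x hx => mul_nonneg hx (sq_nonneg _))
      (hρ.aestronglyMeasurable.mul (hu.continuous.norm.pow 2).aestronglyMeasurable)]
    congr 1
    refine lintegral_congr_ae (hρ0.mono fun x hx => ?_)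
    simp only [ENNReal.ofReal_mul hx, ofReal_norm_sq_eq_enorm_sq]
  have hρ1 : ∫ x, ρ x ∂μ = (∫⁻ x, ENNReal.ofReal (ρ x) ∂μ).toReal :=
    integral_eq_lintegral_of_nonneg_ae hρ0 hρ.aestronglyMeasurable
  have hDu2 : ∫ x, ‖fderiv ℝ u x‖ ^ 2 ∂μ = (∫⁻ x, ‖fderiv ℝ u x‖ₑ ^ 2 ∂μ).toReal := by
    rw [integral_eq_lintegral_of_nonneg_ae (ae_of_all _ fun x => by positivity)
      hDu.aestronglyMeasurable]
    simp only [ofReal_norm_sq_eq_enorm_sq]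
  have hfin : (eLpNormLESNormFDerivOfEqInnerConst μ 2 : ℝ≥0∞) ^ 2 *
      (∫⁻ x, ENNReal.ofReal (ρ x) ∂μ) ^ (2 / 3 : ℝ) *
        essSup (fun x => ENNReal.ofReal (ρ x)) μ ^ (1 / 3 : ℝ) *
          ∫⁻ x, ‖fderiv ℝ u x‖ₑ ^ 2 ∂μ ≠ ⊤ := by
    have := hρ.lintegral_lt_top
    have := hDu.lintegral_lt_top
    simp only [ofReal_norm_sq_eq_enorm_sq] at this
    apply_rules [ENNReal.mul_ne_top, ENNReal.pow_ne_top, ENNReal.coe_ne_top,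
      ENNReal.rpow_ne_top_of_nonneg, LT.lt.ne] <;> norm_num
  rw [hLHS, hρ1, hDu2]
  refine (ENNReal.toReal_mono hfin
    (lintegral_mul_enorm_sq_le μ hE hρ.aemeasurable.ennreal_ofReal hu h2u)).trans_eq ?_
  simp [ENNReal.toReal_mul, ENNReal.toReal_rpow]

end Sobolev

theorem norm_sq_le_two_mul_norm_sq_add_norm_sub_sq {V : Type*} [SeminormedAddCommGroup V]
    (a b : V) : ‖b‖ ^ 2 ≤ 2 * (‖a‖ ^ 2 + ‖a - b‖ ^ 2) :=
  (pow_le_pow_left₀ (norm_nonneg b) (norm_le_norm_add_norm_sub a b) 2).trans add_sq_le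

theorem integrable_of_integrable_mul_one_add_sq {β : Type*} [MeasurableSpace β] {μ : Measure β}
    {f g : β → ℝ} (hf : AEStronglyMeasurable f μ) (hf0 : ∀ p, 0 ≤ f p)
    (hI : Integrable (fun p => f p * (1 + g p ^ 2)) μ) : Integrable f μ :=
  hI.mono' hf (ae_of_all _ fun p => by
    rw [Real.norm_of_nonneg (hf0 p)]; nlinarith [hf0 p, sq_nonneg (g p)])

section Kinetic

variable {α V : Type*} [MeasurableSpace α] [NormedAddCommGroup V] [MeasurableSpace V]
  [BorelSpace V] [SecondCountableTopology V] {μ : Measure α} {ν : Measure V}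
  [SFinite μ] [SFinite ν]

theorem half_integral_norm_sq_sub_le_integral_norm_sub_sq {f : α × V → ℝ}
    (hf : AEStronglyMeasurable f (μ.prod ν)) (hf0 : ∀ p, 0 ≤ f p)
    (hI : Integrable (fun p => f p * (1 + ‖p.2‖ ^ 2)) (μ.prod ν))
    {u : α → V} (hu : Measurable u) {B : ℝ} (hB : ∀ x, ‖u x‖ ≤ B) :
    1 / 2 * ∫ x, ∫ v, f (x, v) * ‖v‖ ^ 2 ∂ν ∂μ - ∫ x, (∫ v, f (x, v) ∂ν) * ‖u x‖ ^ 2 ∂μ ≤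
      ∫ x, ∫ v, f (x, v) * ‖u x - v‖ ^ 2 ∂ν ∂μ := by
  have hv : Measurable fun p : α × V => ‖p.2‖ ^ 2 := by fun_prop
  have hux : Measurable fun p : α × V => ‖u p.1‖ ^ 2 := by fun_prop
  have huv : Measurable fun p : α × V => ‖u p.1 - p.2‖ ^ 2 := by fun_prop
  have hfv : Integrable (fun p => f p * ‖p.2‖ ^ 2) (μ.prod ν) :=
    hI.mono' (hf.mul hv.aestronglyMeasurable) (ae_of_all _ fun p => by
      rw [Real.norm_of_nonneg (by positivity [hf0 p])]; nlinarith [hf0 p])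
  have hfu : Integrable (fun p => f p * ‖u p.1‖ ^ 2) (μ.prod ν) :=
    ((integrable_of_integrable_mul_one_add_sq hf hf0 hI).const_mul (B ^ 2)).mono'
      (hf.mul hux.aestronglyMeasurable) (ae_of_all _ fun p => by
        rw [Real.norm_of_nonneg (by positivity [hf0 p]), mul_comm]
        exact mul_le_mul_of_nonneg_right (pow_le_pow_left₀ (norm_nonneg _) (hB p.1) 2) (hf0 p))
  have hfuv : Integrable (fun p => f p * ‖u p.1 - p.2‖ ^ 2) (μ.prod ν) :=
    ((hfu.add hfv).const_mul 2).mono' (hf.mul huv.aestronglyMeasurable) (ae_of_all _ fun p => by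
      have := (pow_le_pow_left₀ (norm_nonneg _) (norm_sub_le (u p.1) p.2) 2).trans add_sq_le
      rw [Real.norm_of_nonneg (by positivity [hf0 p]), Pi.add_apply]
      nlinarith [mul_le_mul_of_nonneg_left this (hf0 p)])
  have hρu : ∫ x, (∫ v, f (x, v) ∂ν) * ‖u x‖ ^ 2 ∂μ = ∫ p, f p * ‖u p.1‖ ^ 2 ∂(μ.prod ν) := by
    simp only [← integral_mul_const]
    exact integral_integral hfu
  rw [integral_integral hfv, integral_integral hfuv, hρu, ← integral_const_mul,
    ← integral_sub (hfv.const_mul _) hfu]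
  refine integral_mono ((hfv.const_mul _).sub hfu) hfuv fun p => ?_
  have := mul_le_mul_of_nonneg_left (norm_sq_le_two_mul_norm_sq_add_norm_sub_sq (u p.1) p.2)
    (hf0 p)
  linarith

end Kinetic

/-- Lower bound comparing the relative kinetic energy `∫∫ f ‖u - v‖²` with the kinetic
energy `∫∫ f ‖v‖²`, via the interpolation `‖ρ‖_{L^{3/2}} ≤ ‖ρ‖_{L¹}^{2/3} ‖ρ‖_{L^∞}^{1/3}`
for `ρ(x) = ∫ f(x,v) dv` and the Sobolev embedding `Ḣ¹(ℝ³) ↪ L⁶(ℝ³)`. -/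
theorem stmt6 : ∃ C > 0, ∀ (f : E3 × E3 → ℝ) (u : E3 → E3),
    Measurable f → (∀ p, 0 ≤ f p) →
    Integrable (fun p : E3 × E3 => f p * (1 + ‖p.2‖ ^ 2)) →
    essSup (fun x => ENNReal.ofReal (∫ v : E3, f (x, v))) volume < ⊤ →
    ContDiff ℝ 1 u → HasCompactSupport u →
    (1 / 2) * (∫ x : E3, ∫ v : E3, f (x, v) * ‖v‖ ^ 2)
        - C * (∫ x : E3, ∫ v : E3, f (x, v)) ^ ((2 : ℝ) / 3) *
          (essSup (fun x => ENNReal.ofReal (∫ v : E3, f (x, v))) volume).toReal ^ ((1 : ℝ) / 3) *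
          (∫ x : E3, ‖fderiv ℝ u x‖ ^ 2)
      ≤ ∫ x : E3, ∫ v : E3, f (x, v) * ‖u x - v‖ ^ 2 := by
  refine ⟨(eLpNormLESNormFDerivOfEqInnerConst (volume : Measure E3) 2 : ℝ) ^ 2 + 1, by positivity,
    fun f u hf hf0 hI hS hu h2u => ?_⟩
  rw [Measure.volume_eq_prod] at hI
  obtain ⟨B, hB⟩ := h2u.exists_bound_of_continuous hu.continuous
  have hρ : Integrable (fun x => ∫ v, f (x, v)) :=
    (integrable_of_integrable_mul_one_add_sq hf.aestronglyMeasurable hf0 hI).integral_prod_left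
  have hkin := half_integral_norm_sq_sub_le_integral_norm_sub_sq hf.aestronglyMeasurable hf0 hI
    hu.continuous.measurable hB
  have hsob := integral_mul_norm_sq_le volume (finrank_euclideanSpace_fin (n := 3))
    (ae_of_all _ fun x => integral_nonneg fun v => hf0 (x, v)) hρ hS.ne hu h2u
  have hmass : 0 ≤ ∫ x, ∫ v, f (x, v) :=
    integral_nonneg fun x => integral_nonneg fun v => hf0 (x, v)
  have hP : 0 ≤ (∫ x, ∫ v, f (x, v)) ^ (2 / 3 : ℝ) *
      (essSup (fun x => ENNReal.ofReal (∫ v, f (x, v))) volume).toReal ^ (1 / 3 : ℝ) *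
        ∫ x : E3, ‖fderiv ℝ u x‖ ^ 2 := by
    positivity
  nlinarith
end
end

section
/- Let k ∈ ℕ and let q > k + 3 be real. There exists a constant C > 0, depending only on q and k, with the following property: for all N ≥ 0, A ≥ 0, t ≥ 0, every measurable g : ℝ³ → [0,∞), and every V : ℝ³ → ℝ³ such that for all v ∈ ℝ³ one has g(v)·(1 + ‖V(v)‖²)^{q/2} ≤ N and ‖v‖ ≤ e^{−t}·‖V(v)‖ + A, it holds that ∫_{ℝ³} ‖v‖^k·g(v) dv ≤ C·(1 + A)^q·N. -/
/-!
Along the characteristic, `1 + ‖v‖ ≤ (1 + A) + ‖V v‖`, and squaring gives the Peetre-type bound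
`(1 + ‖v‖) ^ q ≤ 2 ^ (q / 2) (1 + A) ^ q (1 + ‖V v‖²) ^ (q / 2)`. Hence
`‖v‖ ^ k g(v) ≤ 2 ^ (q / 2) (1 + A) ^ q N (1 + ‖v‖) ^ (-(q - k))`, and the weight on the right is
integrable on `ℝ³` exactly because `q - k > 3`.
-/

open MeasureTheory

noncomputable section

lemma sq_add_le_two_mul_sq_mul_one_add_sq {a w : ℝ} (ha : 1 ≤ a) :
    (a + w) ^ 2 ≤ 2 * a ^ 2 * (1 + w ^ 2) := by
  nlinarith [sq_nonneg (a - w),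
    mul_le_mul_of_nonneg_right (one_le_pow₀ (n := 2) ha) (sq_nonneg w)]

lemma rpow_le_two_rpow_mul_rpow_mul_one_add_sq_rpow {x a w p : ℝ} (hx : 0 ≤ x) (ha : 1 ≤ a)
    (hxaw : x ≤ a + w) (hp : 0 ≤ p) :
    x ^ p ≤ 2 ^ (p / 2) * a ^ p * (1 + w ^ 2) ^ (p / 2) := by
  have sq_rpow_half : ∀ {y : ℝ}, 0 ≤ y → (y ^ 2) ^ (p / 2) = y ^ p := fun hy => by
    rw [← Real.rpow_natCast, ← Real.rpow_mul hy, Nat.cast_ofNat, mul_div_cancel₀ p two_ne_zero]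
  have hsq : x ^ 2 ≤ 2 * a ^ 2 * (1 + w ^ 2) :=
    (pow_le_pow_left₀ hx hxaw 2).trans (sq_add_le_two_mul_sq_mul_one_add_sq ha)
  calc x ^ p = (x ^ 2) ^ (p / 2) := (sq_rpow_half hx).symm
    _ ≤ (2 * a ^ 2 * (1 + w ^ 2)) ^ (p / 2) := by gcongr
    _ = 2 ^ (p / 2) * a ^ p * (1 + w ^ 2) ^ (p / 2) := by
      rw [Real.mul_rpow (by positivity) (by positivity),
        Real.mul_rpow (by positivity) (by positivity), sq_rpow_half (by linarith)]

lemma pow_mul_one_add_rpow_sub_le {s : ℝ} (hs : 0 ≤ s) (k : ℕ) (q : ℝ) :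
    s ^ k * (1 + s) ^ (q - k) ≤ (1 + s) ^ q :=
  calc s ^ k * (1 + s) ^ (q - k) ≤ (1 + s) ^ k * (1 + s) ^ (q - k) := by
        gcongr; linarith
    _ = (1 + s) ^ q := by
        rw [← Real.rpow_natCast, ← Real.rpow_add (by positivity), add_sub_cancel]

lemma pow_mul_le_mul_one_add_rpow_neg {k : ℕ} {q s w y c A N : ℝ} (hq : 0 ≤ q) (hs : 0 ≤ s)
    (hw : 0 ≤ w) (hy : 0 ≤ y) (hc : c ≤ 1) (hA : 0 ≤ A) (hyN : y * (1 + w ^ 2) ^ (q / 2) ≤ N)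
    (hsw : s ≤ c * w + A) :
    s ^ k * y ≤ 2 ^ (q / 2) * (1 + A) ^ q * N * (1 + s) ^ (-(q - k)) := by
  have hpeetre : (1 + s) ^ q ≤ 2 ^ (q / 2) * (1 + A) ^ q * (1 + w ^ 2) ^ (q / 2) :=
    rpow_le_two_rpow_mul_rpow_mul_one_add_sq_rpow (by positivity) (by linarith)
      (by nlinarith) hq
  have hweighted : s ^ k * y * (1 + s) ^ (q - k) ≤ 2 ^ (q / 2) * (1 + A) ^ q * N :=
    calc s ^ k * y * (1 + s) ^ (q - k) = s ^ k * (1 + s) ^ (q - k) * y := by ring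
      _ ≤ (1 + s) ^ q * y := by gcongr; exact pow_mul_one_add_rpow_sub_le hs k q
      _ ≤ 2 ^ (q / 2) * (1 + A) ^ q * (1 + w ^ 2) ^ (q / 2) * y := by gcongr
      _ = 2 ^ (q / 2) * (1 + A) ^ q * (y * (1 + w ^ 2) ^ (q / 2)) := by ring
      _ ≤ 2 ^ (q / 2) * (1 + A) ^ q * N := by gcongr
  rw [Real.rpow_neg (by positivity), ← div_eq_mul_inv]
  exact (le_div_iff₀ (by positivity)).2 hweighted

lemma lintegral_ofReal_le_mul_lintegral_one_add_norm_rpow_neg {E : Type*}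
    [NormedAddCommGroup E] [MeasurableSpace E] (μ : Measure E) {f : E → ℝ} {M r : ℝ}
    (hM : 0 ≤ M) (hf : ∀ v, f v ≤ M * (1 + ‖v‖) ^ (-r)) :
    ∫⁻ v, ENNReal.ofReal (f v) ∂μ
      ≤ ENNReal.ofReal M * ∫⁻ v, ENNReal.ofReal ((1 + ‖v‖) ^ (-r)) ∂μ := by
  rw [← lintegral_const_mul' _ _ ENNReal.ofReal_ne_top]
  refine lintegral_mono fun v => ?_
  rw [← ENNReal.ofReal_mul hM]
  exact ENNReal.ofReal_le_ofReal (hf v)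

/-- Moment estimate along characteristics: if `g(v) (1 + ‖V(v)‖²)^{q/2} ≤ N` and
`‖v‖ ≤ e^{-t} ‖V(v)‖ + A` for all `v`, then `∫ ‖v‖^k g(v) dv ≤ C (1+A)^q N`,
with `C` depending only on `q > k + 3` and `k`. -/
theorem stmt13 (k : ℕ) (q : ℝ) (hq : (k : ℝ) + 3 < q) :
    ∃ C > 0, ∀ (N A t : ℝ) (g : E3 → ℝ) (V : E3 → E3),
      0 ≤ N → 0 ≤ A → 0 ≤ t → Measurable g → (∀ v, 0 ≤ g v) →
      (∀ v : E3, g v * (1 + ‖V v‖ ^ 2) ^ (q / 2) ≤ N) →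
      (∀ v : E3, ‖v‖ ≤ Real.exp (-t) * ‖V v‖ + A) →
      (∫⁻ v : E3, ENNReal.ofReal (‖v‖ ^ k * g v))
        ≤ ENNReal.ofReal (C * (1 + A) ^ q * N) := by
  set I := ∫⁻ v : E3, ENNReal.ofReal ((1 + ‖v‖) ^ (-(q - k)))
  have hI : I ≠ ⊤ :=
    (finite_integral_one_add_norm (by rw [finrank_euclideanSpace_fin]; push_cast; linarith)).ne
  refine ⟨2 ^ (q / 2) * (I.toReal + 1), by positivity, ?_⟩
  intro N A t g V hN hA ht _ hg hgV hV
  have hpointwise (v : E3) :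
      ‖v‖ ^ k * g v ≤ 2 ^ (q / 2) * (1 + A) ^ q * N * (1 + ‖v‖) ^ (-(q - k)) :=
    pow_mul_le_mul_one_add_rpow_neg (by linarith [k.cast_nonneg (α := ℝ)]) (norm_nonneg v)
      (norm_nonneg (V v)) (hg v) (Real.exp_le_one_iff.2 (by linarith)) hA (hgV v) (hV v)
  calc (∫⁻ v : E3, ENNReal.ofReal (‖v‖ ^ k * g v))
      ≤ ENNReal.ofReal (2 ^ (q / 2) * (1 + A) ^ q * N) * I :=
        lintegral_ofReal_le_mul_lintegral_one_add_norm_rpow_neg _ (by positivity) hpointwise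
    _ ≤ ENNReal.ofReal (2 ^ (q / 2) * (1 + A) ^ q * N) * ENNReal.ofReal (I.toReal + 1) := by
        gcongr
        calc I = ENNReal.ofReal I.toReal := (ENNReal.ofReal_toReal hI).symm
          _ ≤ ENNReal.ofReal (I.toReal + 1) := ENNReal.ofReal_le_ofReal (by linarith)
    _ = ENNReal.ofReal (2 ^ (q / 2) * (I.toReal + 1) * (1 + A) ^ q * N) := by
        rw [← ENNReal.ofReal_mul (by positivity)]; ring_nf
end
end

section
/- Let T > 0. Suppose f : [0,T] × ℝ³ × ℝ³ → [0,∞) is continuously differentiable with f(t,x,v) = 0 for (x,v) outside a fixed compact subset of ℝ³ × ℝ³, and u : [0,T] × ℝ³ → ℝ³, P : [0,T] × ℝ³ → ℝ are twice continuously differentiable with u(t,x) = 0 and P(t,x) = 0 for x outside a fixed compact subset of ℝ³. Assume that pointwise: ∂_t f + v·∇_x f + div_v((u − v)·f) = 0; ∂_t u + (u·∇_x)u − Δ_x u + ∇_x P = ∫_{ℝ³} (v − u(t,x))·f(t,x,v) dv; and div_x u = 0. Then for every t ∈ (0,T) the function E₀(t) := (1/2)∫_{ℝ³} ‖u(t,x)‖²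 dx + (1/2)∫_{ℝ³}∫_{ℝ³} ‖v‖²·f(t,x,v) dv dx is differentiable and E₀'(t) = −∫_{ℝ³} ‖∇_x u(t,x)‖² dx − ∫_{ℝ³}∫_{ℝ³} ‖u(t,x) − v‖²·f(t,x,v) dv dx. -/
/-!
Differentiate both energies under the integral sign and substitute the equations. Every
integration by parts reduces to `∫ ∂ₑ g = 0` for a compactly supported `C¹` function `g`.
The transport terms `∫ ⟪u, (u·∇)u⟫` and `∫ ⟪u, ∇P⟫` vanish because `div u = 0`, and
`∫ ‖v‖² v·∇ₓf` vanishes after integrating in `x` first. Viscosity gives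
`∫ ⟪u, Δu⟫ = -∫ ‖∇u‖²`, and in velocity `∫ ‖v‖² div_v((u - v) f) = -2 ∫ ⟪v, u - v⟫ f`.
What remains are the two drag terms, and they combine to
`∫∫ f (⟪u, v - u⟫ + ⟪v, u - v⟫) = -∫∫ ‖u - v‖² f`.
-/

open MeasureTheory
open scoped RealInnerProductSpace

noncomputable section

section Slices

variable {X Y M : Type*} [TopologicalSpace X] [TopologicalSpace Y]
  [Zero M] {g : X × Y → M}

theorem HasCompactSupport.comp_prodMk_const [T2Space X] (hg : HasCompactSupport g) (v : Y) :
    HasCompactSupport fun y => g (y, v) :=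
  .intro (hg.image continuous_fst) fun _ hy =>
    image_eq_zero_of_notMem_tsupport fun h => hy ⟨_, h, rfl⟩

theorem HasCompactSupport.comp_const_prodMk [T2Space Y] (hg : HasCompactSupport g) (x : X) :
    HasCompactSupport fun w => g (x, w) :=
  .intro (hg.image continuous_snd) fun _ hw =>
    image_eq_zero_of_notMem_tsupport fun h => hw ⟨_, h, rfl⟩

end Slices

section PartialDerivatives

variable {E F G : Type*} [NormedAddCommGroup E] [NormedSpace ℝ E] [NormedAddCommGroup F]
  [NormedSpace ℝ F] [NormedAddCommGroup G] [NormedSpace ℝ G] {g : E × F → G} {x : E} {v : F}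

theorem fderiv_comp_prodMk_const_apply (hg : DifferentiableAt ℝ g (x, v)) (w : E) :
    fderiv ℝ (fun y => g (y, v)) x w = fderiv ℝ g (x, v) (w, 0) := by
  have h : HasFDerivAt (fun y => g (y, v)) ((fderiv ℝ g (x, v)).comp (.inl ℝ E F)) x :=
    hg.hasFDerivAt.comp x (hasFDerivAt_prodMk_left x v)
  simp [h.fderiv]

theorem fderiv_comp_const_prodMk_apply (hg : DifferentiableAt ℝ g (x, v)) (w : F) :
    fderiv ℝ (fun y => g (x, y)) v w = fderiv ℝ g (x, v) (0, w) := by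
  have h : HasFDerivAt (fun y => g (x, y)) ((fderiv ℝ g (x, v)).comp (.inr ℝ E F)) v :=
    hg.hasFDerivAt.comp v (hasFDerivAt_prodMk_right x v)
  simp [h.fderiv]

end PartialDerivatives

section ParametricIntegrals

variable {α G : Type*} [NormedAddCommGroup G] [NormedSpace ℝ G]

theorem hasDerivAt_integral_of_contDiff_of_forall_notMem [NormedAddCommGroup α]
    [NormedSpace ℝ α] [MeasurableSpace α] [OpensMeasurableSpace α] [CompleteSpace G]
    [SecondCountableTopologyEither α G] {μ : Measure α} [IsFiniteMeasureOnCompacts μ]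
    {F : ℝ × α → G} (hF : ContDiff ℝ 1 F) {K : Set α} (hK : IsCompact K)
    (hFK : ∀ s a, a ∉ K → F (s, a) = 0) (t : ℝ) :
    HasDerivAt (fun s => ∫ a, F (s, a) ∂μ) (∫ a, deriv (fun s => F (s, a)) t ∂μ) t := by
  set F' : ℝ × α → G := fun q => fderiv ℝ F q (1, 0)
  have hF'c : Continuous F' := (hF.continuous_fderiv one_ne_zero).clm_apply continuous_const
  have hderiv : ∀ s a, HasDerivAt (fun r => F (r, a)) (F' (s, a)) s := fun s a =>
    (hF.differentiable one_ne_zero (s, a)).hasFDerivAt.comp_hasDerivAt s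
      ((hasDerivAt_id s).prodMk (hasDerivAt_const s a))
  have hF'K : ∀ s a, a ∉ K → F' (s, a) = 0 := fun s a ha => by
    have h0 : (fun r => F (r, a)) = fun _ => 0 := funext fun r => hFK r a ha
    simpa [h0] using (hderiv s a).deriv.symm
  obtain ⟨C, hC⟩ := (isCompact_closedBall t 1 |>.prod hK).exists_bound_of_continuousOn
    hF'c.continuousOn
  have hint : ∀ s, Integrable (fun a => F (s, a)) μ := fun s =>
    (hF.continuous.comp (Continuous.prodMk_right s)).integrable_of_hasCompactSupport
      (HasCompactSupport.intro hK (hFK s))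
  have key := hasDerivAt_integral_of_dominated_loc_of_deriv_le (μ := μ)
    (F := fun s a => F (s, a)) (F' := fun s a => F' (s, a)) (bound := K.indicator fun _ => C)
    (Metric.ball_mem_nhds t one_pos)
    (.of_forall fun s => (hF.continuous.comp (Continuous.prodMk_right s)).aestronglyMeasurable)
    (hint t) (hF'c.comp (Continuous.prodMk_right t)).aestronglyMeasurable
    (.of_forall fun a s hs => ?_)
    ((integrable_indicator_iff hK.measurableSet).2 (integrableOn_const hK.measure_lt_top.ne))
    (.of_forall fun a s _ => hderiv s a)
  · simpa only [fun a => (hderiv t a).deriv] using key.2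
  · by_cases ha : a ∈ K
    · rw [Set.indicator_of_mem ha]
      exact hC (s, a) ⟨Metric.ball_subset_closedBall hs, ha⟩
    · simp [Set.indicator_of_notMem ha, hF'K s a ha]

theorem continuous_integral_of_forall_notMem [TopologicalSpace α] [FirstCountableTopology α]
    [LocallyCompactSpace α] {β : Type*} [TopologicalSpace β] [MeasurableSpace β]
    [OpensMeasurableSpace β] [SecondCountableTopologyEither β G] {μ : Measure β}
    [IsLocallyFiniteMeasure μ] {F : α → β → G} (hF : Continuous F.uncurry) {K : Set β}
    (hK : IsCompact K) (hFK : ∀ a b, b ∉ K → F a b = 0) :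
    Continuous fun a => ∫ b, F a b ∂μ := by
  have h : (fun a => ∫ b, F a b ∂μ) = fun a => ∫ b in K, F a b ∂μ :=
    funext fun a => (setIntegral_eq_integral_of_forall_compl_eq_zero (hFK a)).symm
  exact h ▸ continuous_parametric_integral_of_continuous hF hK

end ParametricIntegrals

section IntegrationByParts

variable {E F : Type*} [NormedAddCommGroup E] [NormedSpace ℝ E] [FiniteDimensional ℝ E]
  [MeasurableSpace E] [BorelSpace E] {μ : Measure E} [μ.IsAddHaarMeasure]

theorem integral_fderiv_apply_eq_zero [NormedAddCommGroup F] [NormedSpace ℝ F] {g : E → F}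
    (hg : ContDiff ℝ 1 g) (hgc : HasCompactSupport g) (v : E) :
    ∫ x, fderiv ℝ g x v ∂μ = 0 := by
  have hg' : Continuous fun x => fderiv ℝ g x v :=
    (hg.continuous_fderiv one_ne_zero).clm_apply continuous_const
  simpa using integral_smul_fderiv_eq_neg_fderiv_smul_of_integrable (μ := μ)
    (f := fun _ => (1 : ℝ)) (g := g) (v := v) (by simp)
    (by simpa using hg'.integrable_of_hasCompactSupport (hgc.fderiv_apply (𝕜 := ℝ) v))
    (by simpa using hg.continuous.integrable_of_hasCompactSupport hgc)
    (fun _ _ => differentiableAt_const _) (fun x _ => hg.differentiable one_ne_zero x)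

theorem integral_inner_fderiv_apply_eq_neg [NormedAddCommGroup F] [InnerProductSpace ℝ F]
    {U V : E → F} (hU : ContDiff ℝ 1 U) (hV : ContDiff ℝ 1 V) (hUc : HasCompactSupport U)
    (v : E) : ∫ x, ⟪U x, fderiv ℝ V x v⟫ ∂μ = -∫ x, ⟪fderiv ℝ U x v, V x⟫ ∂μ := by
  have hDU : Continuous fun x => fderiv ℝ U x v :=
    (hU.continuous_fderiv one_ne_zero).clm_apply continuous_const
  have hDV : Continuous fun x => fderiv ℝ V x v :=
    (hV.continuous_fderiv one_ne_zero).clm_apply continuous_const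
  have hsupp : HasCompactSupport fun x => ⟪U x, V x⟫ :=
    hUc.mono fun x hx h => hx (by simp [h])
  have h := integral_fderiv_apply_eq_zero (μ := μ) (hU.inner ℝ hV) hsupp v
  simp only [fun x => fderiv_inner_apply ℝ (hU.differentiable one_ne_zero x)
    (hV.differentiable one_ne_zero x)] at h
  rw [integral_add] at h
  · linarith
  · exact (hU.continuous.inner hDV).integrable_of_hasCompactSupport
      (hUc.mono fun x hx h => hx (by simp [h]))
  · exact (hDU.inner hV.continuous).integrable_of_hasCompactSupport
      ((hUc.fderiv_apply (𝕜 := ℝ) v).mono fun x hx h => hx (by simp [h]))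

theorem integral_inner_sum_fderiv_fderiv_eq_neg [NormedAddCommGroup F] [InnerProductSpace ℝ F]
    {ι : Type*} [Fintype ι] {U : E → F} (hU : ContDiff ℝ 2 U) (hUc : HasCompactSupport U)
    (e : ι → E) :
    ∫ x, ⟪U x, ∑ i, fderiv ℝ (fun y => fderiv ℝ U y (e i)) x (e i)⟫ ∂μ
      = -∫ x, ∑ i, ‖fderiv ℝ U x (e i)‖ ^ 2 ∂μ := by
  have hU1 : ContDiff ℝ 1 U := hU.of_le one_le_two
  have hDU : ∀ i, ContDiff ℝ 1 fun y => fderiv ℝ U y (e i) := fun i =>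
    (hU.fderiv_right one_add_one_eq_two.le).clm_apply contDiff_const
  simp only [inner_sum]
  rw [integral_finsetSum _ fun i _ => ?_, integral_finsetSum _ fun i _ => ?_,
    ← Finset.sum_neg_distrib]
  · refine Finset.sum_congr rfl fun i _ => ?_
    simp [integral_inner_fderiv_apply_eq_neg hU1 (hDU i) hUc (e i)]
  · exact (((hDU i).continuous).norm.pow 2).integrable_of_hasCompactSupport
      ((hUc.fderiv_apply (𝕜 := ℝ) (e i)).mono fun x hx h => hx (by simp [h]))
  · exact (hU.continuous.inner ((hDU i).continuous_fderiv one_ne_zero |>.clm_apply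
      continuous_const)).integrable_of_hasCompactSupport (hUc.mono fun x hx h => hx (by simp [h]))

end IntegrationByParts

section Drag

variable {E : Type*} [NormedAddCommGroup E] [InnerProductSpace ℝ E] [CompleteSpace E]
  [MeasurableSpace E] [OpensMeasurableSpace E] [SecondCountableTopology E] {μ ν : Measure E}
  [SFinite ν] [IsFiniteMeasureOnCompacts μ] [IsFiniteMeasureOnCompacts ν]

theorem integral_drag_power_add_eq_neg {g : E × E → ℝ} (hg : Continuous g)
    (hgc : HasCompactSupport g) {U : E → E} (hU : Continuous U) :
    (∫ x, ⟪U x, ∫ v, g (x, v) • (v - U x) ∂ν⟫ ∂μ) + ∫ x, ∫ v, ⟪v, U x - v⟫ * g (x, v) ∂ν ∂μ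
      = -∫ x, ∫ v, ‖U x - v‖ ^ 2 * g (x, v) ∂ν ∂μ := by
  have hgx : ∀ x, Continuous fun v => g (x, v) := fun x =>
    hg.comp (continuous_const.prodMk continuous_id)
  have hslice : ∀ x (F : E → ℝ), Continuous F → Integrable (fun v => F v * g (x, v)) ν :=
    fun x F hF =>
      (hF.mul (hgx x)).integrable_of_hasCompactSupport (hgc.comp_const_prodMk x).mul_left
  have houter : ∀ F : E × E → ℝ, Continuous F →
      Integrable (fun x => ∫ v, F (x, v) * g (x, v) ∂ν) μ :=
    fun F hF => ((hF.mul hg).integrable_of_hasCompactSupport hgc.mul_left).integral_prod_left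
  have hinner : ∀ x,
      ⟪U x, ∫ v, g (x, v) • (v - U x) ∂ν⟫ = ∫ v, ⟪U x, v - U x⟫ * g (x, v) ∂ν := fun x => by
    have hi : Integrable (fun v => g (x, v) • (v - U x)) ν :=
      ((hgx x).smul (continuous_id.sub continuous_const)).integrable_of_hasCompactSupport
        (hgc.comp_const_prodMk x).smul_right
    rw [← integral_inner hi]
    simp [real_inner_smul_right, mul_comm]
  have hcU : Continuous fun z : E × E => U z.1 := hU.comp continuous_fst
  have h1 : Integrable (fun x => ∫ v, ⟪U x, v - U x⟫ * g (x, v) ∂ν) μ :=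
    houter (fun z => ⟪U z.1, z.2 - U z.1⟫) (hcU.inner (continuous_snd.sub hcU))
  have h2 : Integrable (fun x => ∫ v, ⟪v, U x - v⟫ * g (x, v) ∂ν) μ :=
    houter (fun z => ⟪z.2, U z.1 - z.2⟫) (continuous_snd.inner (hcU.sub continuous_snd))
  simp only [hinner]
  rw [← integral_add h1 h2, ← integral_neg]
  congr 1 with x
  rw [← integral_add (hslice x (fun v => ⟪U x, v - U x⟫) (by fun_prop))
    (hslice x (fun v => ⟪v, U x - v⟫) (by fun_prop)), ← integral_neg]
  congr 1 with v
  rw [← neg_sub (U x) v, inner_neg_right, ← real_inner_self_eq_norm_sq, inner_sub_left]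
  ring

end Drag

section EuclideanSpace

variable {ι : Type*} [Fintype ι] [DecidableEq ι]

local notation "𝔼" => EuclideanSpace ℝ ι

def divergence (A : 𝔼 → 𝔼) (x : 𝔼) : ℝ :=
  ∑ i, fderiv ℝ A x (EuclideanSpace.single i 1) i

theorem fderiv_apply_eq_sum {h : 𝔼 → ℝ} (x y : 𝔼) :
    fderiv ℝ h x y = ∑ i, y i * fderiv ℝ h x (EuclideanSpace.single i 1) := by
  conv_lhs => rw [← (EuclideanSpace.basisFun ι ℝ).sum_repr y]
  simp [map_sum]

theorem divergence_smul {h : 𝔼 → ℝ} {A : 𝔼 → 𝔼} {x : 𝔼} (hh : DifferentiableAt ℝ h x)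
    (hA : DifferentiableAt ℝ A x) :
    divergence (fun y => h y • A y) x = fderiv ℝ h x (A x) + h x * divergence A x := by
  simp only [divergence, fderiv_fun_smul hh hA, fderiv_apply_eq_sum x (A x), Finset.mul_sum,
    ← Finset.sum_add_distrib]
  refine Finset.sum_congr rfl fun i _ => ?_
  simp only [add_apply, smul_apply, ContinuousLinearMap.smulRight_apply, PiLp.add_apply,
    PiLp.smul_apply, smul_eq_mul]
  ring

theorem integral_divergence_eq_zero {A : 𝔼 → 𝔼} (hA : ContDiff ℝ 1 A)
    (hAc : HasCompactSupport A) : ∫ x, divergence A x = 0 := by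
  have hint : ∀ i, Integrable fun x => fderiv ℝ A x (EuclideanSpace.single i 1) := fun i =>
    ((hA.continuous_fderiv one_ne_zero).clm_apply continuous_const).integrable_of_hasCompactSupport
      (hAc.fderiv_apply (𝕜 := ℝ) _)
  have hcoord : ∀ i, ∫ x, fderiv ℝ A x (EuclideanSpace.single i 1) i = 0 := fun i => by
    simpa [integral_fderiv_apply_eq_zero hA hAc] using
      (EuclideanSpace.proj i : 𝔼 →L[ℝ] ℝ).integral_comp_comm (hint i)
  simp only [divergence]
  rw [integral_finsetSum _ fun i _ => ?_]
  · simp [hcoord]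
  · exact (EuclideanSpace.proj i : 𝔼 →L[ℝ] ℝ).integrable_comp (hint i)

theorem integral_fderiv_apply_add_mul_divergence_eq_zero {h : 𝔼 → ℝ} {A : 𝔼 → 𝔼}
    (hh : ContDiff ℝ 1 h) (hA : ContDiff ℝ 1 A) (hhc : HasCompactSupport h) :
    ∫ x, (fderiv ℝ h x (A x) + h x * divergence A x) = 0 := by
  rw [← integral_divergence_eq_zero (hh.smul hA) hhc.smul_right]
  congr 1 with x
  exact (divergence_smul (hh.differentiable one_ne_zero x) (hA.differentiable one_ne_zero x)).symm

theorem integral_fderiv_apply_eq_zero_of_divergence_eq_zero {p : 𝔼 → ℝ} {U : 𝔼 → 𝔼}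
    (hp : ContDiff ℝ 1 p) (hU : ContDiff ℝ 1 U) (hpc : HasCompactSupport p)
    (hdiv : ∀ x, divergence U x = 0) : ∫ x, fderiv ℝ p x (U x) = 0 := by
  simpa [hdiv] using integral_fderiv_apply_add_mul_divergence_eq_zero hp hU hpc

theorem integral_inner_fderiv_apply_self_eq_zero_of_divergence_eq_zero {U : 𝔼 → 𝔼}
    (hU : ContDiff ℝ 1 U) (hUc : HasCompactSupport U) (hdiv : ∀ x, divergence U x = 0) :
    ∫ x, ⟪U x, fderiv ℝ U x (U x)⟫ = 0 := by
  have h := integral_fderiv_apply_add_mul_divergence_eq_zero (hU.inner ℝ hU) hU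
    (hUc.mono fun x hx h => hx (by simp [h]))
  simp only [hdiv, mul_zero, add_zero,
    fun x => fderiv_inner_apply ℝ (hU.differentiable one_ne_zero x)
      (hU.differentiable one_ne_zero x), real_inner_comm (U _), ← two_mul,
    integral_const_mul] at h
  simpa using h

theorem integral_norm_sq_mul_fderiv_apply_sub {g : 𝔼 → ℝ} (hg : ContDiff ℝ 1 g)
    (hgc : HasCompactSupport g) (c : 𝔼) :
    ∫ v, ‖v‖ ^ 2 * (fderiv ℝ g v (c - v) - Fintype.card ι * g v)
      = -2 * ∫ v, ⟪v, c - v⟫ * g v := by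
  have hdiv : ∀ v, divergence (fun w => c - w) v = -Fintype.card ι := fun v => by
    simp [divergence, fderiv_const_sub (f := fun w : 𝔼 => w)]
  have hD : ∀ v, fderiv ℝ (fun w => ‖w‖ ^ 2 * g w) v (c - v)
      = 2 * ⟪v, c - v⟫ * g v + ‖v‖ ^ 2 * fderiv ℝ g v (c - v) := fun v => by
    rw [fderiv_fun_mul (contDiff_norm_sq ℝ |>.differentiable two_ne_zero v)
      (hg.differentiable one_ne_zero v)]
    simp only [fderiv_norm_sq_apply, add_apply, smul_apply, map_sub, smul_eq_mul,
      coe_innerSL_apply, nsmul_eq_mul, Nat.cast_ofNat, inner_sub_right]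
    ring
  have h := integral_fderiv_apply_add_mul_divergence_eq_zero (A := fun w => c - w)
    ((contDiff_norm_sq ℝ).mul hg) (contDiff_const.sub contDiff_id) hgc.mul_left
  have hpt : ∀ v, fderiv ℝ (fun w => ‖w‖ ^ 2 * g w) v (c - v)
      + ‖v‖ ^ 2 * g v * divergence (fun w => c - w) v
      = 2 * (⟪v, c - v⟫ * g v) + ‖v‖ ^ 2 * (fderiv ℝ g v (c - v) - Fintype.card ι * g v) :=
    fun v => by rw [hD, hdiv]; ring
  have hsupp : HasCompactSupport fun v => ‖v‖ ^ 2 * (fderiv ℝ g v (c - v) - Fintype.card ι * g v) :=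
    hgc.mono' fun v hv => by
      by_contra hvg
      simp [fderiv_of_notMem_tsupport ℝ hvg, image_eq_zero_of_notMem_tsupport hvg] at hv
  simp only [hpt] at h
  rw [integral_add, integral_const_mul] at h
  · linarith
  · exact (((continuous_id.inner (continuous_const.sub continuous_id)).mul
      hg.continuous).integrable_of_hasCompactSupport hgc.mul_left).const_mul 2
  · exact ((continuous_norm.pow 2).mul (((hg.continuous_fderiv one_ne_zero).clm_apply
      (continuous_const.sub continuous_id)).sub (continuous_const.mul hg.continuous))
      ).integrable_of_hasCompactSupport hsupp

theorem integral_norm_sq_mul_vlasov {g : 𝔼 × 𝔼 → ℝ} (hg : ContDiff ℝ 1 g)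
    (hgc : HasCompactSupport g) {U : 𝔼 → 𝔼} (hU : Continuous U) :
    ∫ z : 𝔼 × 𝔼, ‖z.2‖ ^ 2 * (⟪z.2, gradient (fun y => g (y, z.2)) z.1⟫
        + (⟪U z.1 - z.2, gradient (fun w => g (z.1, w)) z.2⟫ - Fintype.card ι * g z))
      = -2 * ∫ x, ∫ v, ⟪v, U x - v⟫ * g (x, v) := by
  have hDg : ∀ z, DifferentiableAt ℝ g z := hg.differentiable one_ne_zero
  have hDgc : Continuous (fderiv ℝ g) := hg.continuous_fderiv one_ne_zero
  have hpt : ∀ z : 𝔼 × 𝔼, ‖z.2‖ ^ 2 * (⟪z.2, gradient (fun y => g (y, z.2)) z.1⟫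
        + (⟪U z.1 - z.2, gradient (fun w => g (z.1, w)) z.2⟫ - Fintype.card ι * g z))
      = ‖z.2‖ ^ 2 * fderiv ℝ g z (z.2, 0)
        + ‖z.2‖ ^ 2 * (fderiv ℝ g z (0, U z.1 - z.2) - Fintype.card ι * g z) := fun z => by
    simp only [inner_gradient_right, fderiv_comp_prodMk_const_apply (hDg z),
      fderiv_comp_const_prodMk_apply (hDg z), conj_trivial]
    ring
  have hx_int : Integrable (fun z : 𝔼 × 𝔼 => ‖z.2‖ ^ 2 * fderiv ℝ g z (z.2, 0))
      (volume.prod volume) :=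
    ((continuous_snd.norm.pow 2).mul (hDgc.clm_apply (continuous_snd.prodMk continuous_const))
      ).integrable_of_hasCompactSupport ((hgc.fderiv (𝕜 := ℝ)).mono fun z hz h => hz (by simp [h]))
  have hv_int : Integrable (fun z : 𝔼 × 𝔼 =>
      ‖z.2‖ ^ 2 * (fderiv ℝ g z (0, U z.1 - z.2) - Fintype.card ι * g z)) (volume.prod volume) :=
    ((continuous_snd.norm.pow 2).mul ((hDgc.clm_apply (continuous_const.prodMk
      ((hU.comp continuous_fst).sub continuous_snd))).sub (continuous_const.mul hg.continuous))
      ).integrable_of_hasCompactSupport (hgc.mono' fun z hz => by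
        by_contra hzg
        simp [fderiv_of_notMem_tsupport ℝ hzg, image_eq_zero_of_notMem_tsupport hzg] at hz)
  have hx_zero : ∫ z : 𝔼 × 𝔼, ‖z.2‖ ^ 2 * fderiv ℝ g z (z.2, 0) = 0 := by
    rw [Measure.volume_eq_prod, integral_prod_symm _ hx_int]
    refine integral_eq_zero_of_ae (.of_forall fun v => ?_)
    simp only [← fderiv_comp_prodMk_const_apply (hDg _), integral_const_mul]
    have hslice : ContDiff ℝ 1 fun y => g (y, v) := hg.comp (contDiff_id.prodMk contDiff_const)
    rw [integral_fderiv_apply_eq_zero hslice (hgc.comp_prodMk_const v), mul_zero]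
    rfl
  have hv_eq : ∀ x, ∫ v, ‖v‖ ^ 2 * (fderiv ℝ g (x, v) (0, U x - v) - Fintype.card ι * g (x, v))
      = -2 * ∫ v, ⟪v, U x - v⟫ * g (x, v) := fun x => by
    simp only [← fderiv_comp_const_prodMk_apply (hDg _)]
    exact integral_norm_sq_mul_fderiv_apply_sub (hg.comp (contDiff_const.prodMk contDiff_id))
      (hgc.comp_const_prodMk x) (U x)
  simp only [hpt]
  rw [Measure.volume_eq_prod, integral_add hx_int hv_int, ← Measure.volume_eq_prod, hx_zero,
    Measure.volume_eq_prod, integral_prod _ hv_int]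
  simp only [hv_eq, integral_const_mul, zero_add]

theorem hasDerivAt_integral_integral_norm_sq_mul_of_vlasov {f : ℝ × 𝔼 × 𝔼 → ℝ}
    (hf : ContDiff ℝ 1 f) {K : Set (𝔼 × 𝔼)} (hK : IsCompact K)
    (hfK : ∀ s x v, (x, v) ∉ K → f (s, x, v) = 0) {U : 𝔼 → 𝔼} (hU : Continuous U) {t : ℝ}
    (hV : ∀ x v, deriv (fun s => f (s, x, v)) t + ⟪v, gradient (fun y => f (t, y, v)) x⟫
      + (⟪U x - v, gradient (fun w => f (t, x, w)) v⟫ - Fintype.card ι * f (t, x, v)) = 0) :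
    HasDerivAt (fun s => ∫ x, ∫ v, ‖v‖ ^ 2 * f (s, x, v))
      (2 * ∫ x, ∫ v, ⟪v, U x - v⟫ * f (t, x, v)) t := by
  have hfc : ∀ s, HasCompactSupport fun z => f (s, z) := fun s =>
    .intro hK fun z hz => hfK s z.1 z.2 hz
  have hfs : ∀ s, ContDiff ℝ 1 fun z => f (s, z) := fun s =>
    hf.comp (contDiff_const.prodMk contDiff_id)
  have hprod : ∀ s, ∫ x, ∫ v, ‖v‖ ^ 2 * f (s, x, v) = ∫ z : 𝔼 × 𝔼, ‖z.2‖ ^ 2 * f (s, z) :=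
    fun s => (integral_prod _ (((continuous_snd.norm.pow 2).mul (hfs s).continuous
      ).integrable_of_hasCompactSupport (hfc s).mul_left)).symm
  have hderiv : ∀ z : 𝔼 × 𝔼, deriv (fun s => ‖z.2‖ ^ 2 * f (s, z)) t
      = -(‖z.2‖ ^ 2 * (⟪z.2, gradient (fun y => f (t, y, z.2)) z.1⟫
        + (⟪U z.1 - z.2, gradient (fun w => f (t, z.1, w)) z.2⟫
          - Fintype.card ι * f (t, z)))) := fun z => by
    rw [deriv_const_mul_field]
    linear_combination ‖z.2‖ ^ 2 * hV z.1 z.2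
  have key := hasDerivAt_integral_of_contDiff_of_forall_notMem (μ := volume)
    (F := fun q : ℝ × 𝔼 × 𝔼 => ‖q.2.2‖ ^ 2 * f q)
    (((contDiff_snd.snd).norm_sq ℝ).mul hf) hK (fun s z hz => by simp [hfK s z.1 z.2 hz]) t
  simp only [hderiv, integral_neg, integral_norm_sq_mul_vlasov (hfs t) (hfc t) hU] at key
  simpa only [hprod, neg_mul, neg_neg] using key

theorem hasDerivAt_integral_norm_sq_of_navierStokes {u : ℝ × 𝔼 → 𝔼} (hu : ContDiff ℝ 2 u)
    {K : Set 𝔼} (hK : IsCompact K) (huK : ∀ s x, x ∉ K → u (s, x) = 0) {p : 𝔼 → ℝ}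
    (hp : ContDiff ℝ 1 p) (hpc : HasCompactSupport p) {S : 𝔼 → 𝔼} (hS : Continuous S) {t : ℝ}
    (hNS : ∀ x, deriv (fun s => u (s, x)) t + fderiv ℝ (fun y => u (t, y)) x (u (t, x))
      - (∑ i, fderiv ℝ (fun y => fderiv ℝ (fun y' => u (t, y')) y (EuclideanSpace.single i 1))
          x (EuclideanSpace.single i 1))
      + gradient p x = S x)
    (hdiv : ∀ x, divergence (fun y => u (t, y)) x = 0) :
    HasDerivAt (fun s => ∫ x, ‖u (s, x)‖ ^ 2)
      (2 * ((∫ x, ⟪u (t, x), S x⟫)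
        - ∫ x, ∑ i, ‖fderiv ℝ (fun y => u (t, y)) x (EuclideanSpace.single i 1)‖ ^ 2)) t := by
  set U : 𝔼 → 𝔼 := fun y => u (t, y)
  have hU2 : ContDiff ℝ 2 U := hu.comp (contDiff_const.prodMk contDiff_id)
  have hU1 : ContDiff ℝ 1 U := hU2.of_le one_le_two
  have hUc : HasCompactSupport U := .intro hK (huK t)
  have hint : ∀ W : 𝔼 → 𝔼, Continuous W → Integrable fun x => ⟪U x, W x⟫ := fun W hW =>
    (hU1.continuous.inner hW).integrable_of_hasCompactSupport
      (hUc.mono fun x hx h => hx (by simp [h]))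
  have hΔ : Continuous fun x => ∑ i, fderiv ℝ (fun y => fderiv ℝ U y (EuclideanSpace.single i 1))
      x (EuclideanSpace.single i 1) := continuous_finsetSum _ fun i _ =>
    (((hU2.fderiv_right one_add_one_eq_two.le).clm_apply contDiff_const).continuous_fderiv
      one_ne_zero).clm_apply continuous_const
  have hDU : Continuous fun x => fderiv ℝ U x (U x) :=
    (hU1.continuous_fderiv one_ne_zero).clm_apply hU1.continuous
  have hpU : Integrable fun x => fderiv ℝ p x (U x) :=
    ((hp.continuous_fderiv one_ne_zero).clm_apply hU1.continuous).integrable_of_hasCompactSupport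
      (hUc.mono fun x hx h => hx (by simp [h]))
  have hdt : ∀ x, deriv (fun s => ‖u (s, x)‖ ^ 2) t
      = 2 * (⟪U x, S x⟫ - ⟪U x, fderiv ℝ U x (U x)⟫
        + ⟪U x, ∑ i, fderiv ℝ (fun y => fderiv ℝ U y (EuclideanSpace.single i 1))
          x (EuclideanSpace.single i 1)⟫ - fderiv ℝ p x (U x)) := fun x => by
    have hux : DifferentiableAt ℝ (fun s => u (s, x)) t :=
      (hu.comp (contDiff_id.prodMk contDiff_const)).differentiable two_ne_zero t
    have hgrad : fderiv ℝ p x (U x) = ⟪U x, gradient p x⟫ := by simp [inner_gradient_right]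
    rw [hux.hasDerivAt.norm_sq.deriv, hgrad, ← inner_sub_right, ← inner_add_right,
      ← inner_sub_right, ← hNS x]
    congr 2
    abel
  have hSDU : Integrable fun x => ⟪U x, S x⟫ - ⟪U x, fderiv ℝ U x (U x)⟫ :=
    (hint _ hS).sub (hint _ hDU)
  have hSDUΔ : Integrable fun x => ⟪U x, S x⟫ - ⟪U x, fderiv ℝ U x (U x)⟫
      + ⟪U x, ∑ i, fderiv ℝ (fun y => fderiv ℝ U y (EuclideanSpace.single i 1))
          x (EuclideanSpace.single i 1)⟫ := hSDU.add (hint _ hΔ)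
  have key := hasDerivAt_integral_of_contDiff_of_forall_notMem (μ := volume)
    (F := fun q => ‖u q‖ ^ 2) (hu.norm_sq ℝ |>.of_le one_le_two) hK
    (fun s x hx => by simp [huK s x hx]) t
  simp only [hdt, integral_const_mul] at key
  rwa [integral_sub hSDUΔ hpU, integral_add hSDU (hint _ hΔ), integral_sub (hint _ hS) (hint _ hDU),
    integral_inner_fderiv_apply_self_eq_zero_of_divergence_eq_zero hU1 hUc hdiv,
    integral_fderiv_apply_eq_zero_of_divergence_eq_zero hp hU1 hpc hdiv,
    integral_inner_sum_fderiv_fderiv_eq_neg hU2 hUc, sub_zero, sub_zero, ← sub_eq_add_neg] at key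

end EuclideanSpace

theorem stmt16_general (T : ℝ)
    (f : ℝ × E3 × E3 → ℝ) (u : ℝ × E3 → E3) (P : ℝ × E3 → ℝ)
    (hf : ContDiff ℝ 1 f) (hu : ContDiff ℝ 2 u) (hP : ContDiff ℝ 2 P)
    (Kf : Set (E3 × E3)) (hKf : IsCompact Kf)
    (hfsupp : ∀ (t : ℝ) (x v : E3), (x, v) ∉ Kf → f (t, x, v) = 0)
    (Ku : Set E3) (hKu : IsCompact Ku)
    (husupp : ∀ (t : ℝ) (x : E3), x ∉ Ku → u (t, x) = 0 ∧ P (t, x) = 0)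
    (hVlasov : ∀ t ∈ Set.Icc (0 : ℝ) T, ∀ (x v : E3),
      deriv (fun s => f (s, x, v)) t
        + ⟪v, gradient (fun y => f (t, y, v)) x⟫
        + (⟪u (t, x) - v, gradient (fun w => f (t, x, w)) v⟫ - 3 * f (t, x, v)) = 0)
    (hNS : ∀ t ∈ Set.Icc (0 : ℝ) T, ∀ x : E3,
      deriv (fun s => u (s, x)) t
        + fderiv ℝ (fun y => u (t, y)) x (u (t, x))
        - (∑ i : Fin 3, fderiv ℝ
            (fun y => fderiv ℝ (fun y' => u (t, y')) y (EuclideanSpace.single i 1))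
            x (EuclideanSpace.single i 1))
        + gradient (fun y => P (t, y)) x
      = ∫ v : E3, f (t, x, v) • (v - u (t, x)))
    (hdivfree : ∀ t ∈ Set.Icc (0 : ℝ) T, ∀ x : E3,
      (∑ i : Fin 3, fderiv ℝ (fun y => u (t, y)) x (EuclideanSpace.single i 1) i) = 0) :
    ∀ t ∈ Set.Ioo (0 : ℝ) T,
      HasDerivAt
        (fun s => (1 / 2) * (∫ x : E3, ‖u (s, x)‖ ^ 2)
          + (1 / 2) * (∫ x : E3, ∫ v : E3, ‖v‖ ^ 2 * f (s, x, v)))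
        (-((∫ x : E3, ∑ j : Fin 3,
              ‖fderiv ℝ (fun y => u (t, y)) x (EuclideanSpace.single j 1)‖ ^ 2)
          + ∫ x : E3, ∫ v : E3, ‖u (t, x) - v‖ ^ 2 * f (t, x, v))) t := by
  intro t ht
  have htI : t ∈ Set.Icc (0 : ℝ) T := Set.Ioo_subset_Icc_self ht
  have hUt : Continuous fun x => u (t, x) :=
    hu.continuous.comp (continuous_const.prodMk continuous_id)
  have hS : Continuous fun x => ∫ v : E3, f (t, x, v) • (v - u (t, x)) :=
    continuous_integral_of_forall_notMem (F := fun x v => f (t, x, v) • (v - u (t, x)))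
      (by fun_prop) (hKf.image continuous_snd)
      fun x v hv => by simp [hfsupp t x v fun h => hv ⟨_, h, rfl⟩]
  have hPt : ContDiff ℝ 1 fun y => P (t, y) :=
    (hP.comp (contDiff_const.prodMk contDiff_id)).of_le one_le_two
  have hfluid := hasDerivAt_integral_norm_sq_of_navierStokes hu hKu
    (fun s x hx => (husupp s x hx).1) hPt (.intro hKu fun x hx => (husupp t x hx).2) hS
    (hNS t htI) (hdivfree t htI)
  have hkinetic := hasDerivAt_integral_integral_norm_sq_mul_of_vlasov hf hKf hfsupp hUt
    (by simpa using hVlasov t htI)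
  have hdrag := integral_drag_power_add_eq_neg (μ := volume) (ν := volume)
    (g := fun z => f (t, z)) (by fun_prop) (.intro hKf fun z hz => hfsupp t z.1 z.2 hz) hUt
  beta_reduce at hdrag
  exact ((hfluid.const_mul (1 / 2)).add (hkinetic.const_mul (1 / 2))).congr_deriv (by linarith)

/-- Energy balance `dE₀/dt + D₀ = 0` for the Vlasov–Navier–Stokes system: for smooth,
suitably compactly supported solutions, the total energy
`E₀(t) = ½∫‖u‖² + ½∫∫‖v‖²f` is differentiable on `(0,T)` with derivative
`-D₀(t) = -(∫‖∇ₓu‖² + ∫∫‖u - v‖²f)` (Frobenius norm of `∇ₓu`). -/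
theorem stmt16 (T : ℝ) (hT : 0 < T)
    (f : ℝ × E3 × E3 → ℝ) (u : ℝ × E3 → E3) (P : ℝ × E3 → ℝ)
    (hf : ContDiff ℝ 1 f) (hu : ContDiff ℝ 2 u) (hP : ContDiff ℝ 2 P)
    (hfnn : ∀ t ∈ Set.Icc (0 : ℝ) T, ∀ (x v : E3), 0 ≤ f (t, x, v))
    (Kf : Set (E3 × E3)) (hKf : IsCompact Kf)
    (hfsupp : ∀ (t : ℝ) (x v : E3), (x, v) ∉ Kf → f (t, x, v) = 0)
    (Ku : Set E3) (hKu : IsCompact Ku)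
    (husupp : ∀ (t : ℝ) (x : E3), x ∉ Ku → u (t, x) = 0 ∧ P (t, x) = 0)
    (hVlasov : ∀ t ∈ Set.Icc (0 : ℝ) T, ∀ (x v : E3),
      deriv (fun s => f (s, x, v)) t
        + ⟪v, gradient (fun y => f (t, y, v)) x⟫
        + (⟪u (t, x) - v, gradient (fun w => f (t, x, w)) v⟫ - 3 * f (t, x, v)) = 0)
    (hNS : ∀ t ∈ Set.Icc (0 : ℝ) T, ∀ x : E3,
      deriv (fun s => u (s, x)) t
        + fderiv ℝ (fun y => u (t, y)) x (u (t, x))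
        - (∑ i : Fin 3, fderiv ℝ
            (fun y => fderiv ℝ (fun y' => u (t, y')) y (EuclideanSpace.single i 1))
            x (EuclideanSpace.single i 1))
        + gradient (fun y => P (t, y)) x
      = ∫ v : E3, f (t, x, v) • (v - u (t, x)))
    (hdivfree : ∀ t ∈ Set.Icc (0 : ℝ) T, ∀ x : E3,
      (∑ i : Fin 3, fderiv ℝ (fun y => u (t, y)) x (EuclideanSpace.single i 1) i) = 0) :
    ∀ t ∈ Set.Ioo (0 : ℝ) T,
      HasDerivAt
        (fun s => (1 / 2) * (∫ x : E3, ‖u (s, x)‖ ^ 2)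
          + (1 / 2) * (∫ x : E3, ∫ v : E3, ‖v‖ ^ 2 * f (s, x, v)))
        (-((∫ x : E3, ∑ j : Fin 3,
              ‖fderiv ℝ (fun y => u (t, y)) x (EuclideanSpace.single j 1)‖ ^ 2)
          + ∫ x : E3, ∫ v : E3, ‖u (t, x) - v‖ ^ 2 * f (t, x, v))) t :=
  stmt16_general T f u P hf hu hP Kf hKf hfsupp Ku hKu husupp hVlasov hNS hdivfree
end
end

section
/- There exists a constant C > 0 such that for every twice continuously differentiable u : ℝ³ → ℝ with compact support: ‖∇u‖_{L²(ℝ³)} ≤ C·‖∇²u‖_{L²(ℝ³)}^{5/7}·‖u‖_{L¹(ℝ³)}^{2/7}. -/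
/-!
Integrating by parts, `‖∇u‖₂² = -∑ᵢ ∫ ∂ᵢ²u · u ≤ 3 ‖∇²u‖₂ ‖u‖₂`. Hölder's inequality interpolates
`‖u‖₂ ≤ ‖u‖₁^{2/5} ‖u‖₆^{3/5}`, and the Gagliardo–Nirenberg–Sobolev inequality
`‖u‖₆ ≲ ‖∇u‖₂` in dimension three turns this into `‖∇u‖₂² ≲ ‖∇²u‖₂ ‖u‖₁^{2/5} ‖∇u‖₂^{3/5}`,
that is `‖∇u‖₂^{7/5} ≲ ‖∇²u‖₂ ‖u‖₁^{2/5}`.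
-/

open MeasureTheory

noncomputable section

open Real Module
open scoped NNReal

theorem rpow_le_of_le_mul_rpow {a c θ : ℝ} (ha : 0 ≤ a) (hc : 0 ≤ c) (hθ : θ < 1)
    (h : a ≤ c * a ^ θ) : a ^ (1 - θ) ≤ c := by
  rcases ha.eq_or_lt with rfl | ha
  · rwa [zero_rpow (by linarith)]
  · rwa [rpow_sub ha, rpow_one, div_le_iff₀ (rpow_pos_of_pos ha θ)]

theorem rpow_half_le_of_interpolation_bounds {A h n₁ n₂ n₆ k C : ℝ} (hA : 0 ≤ A) (hh : 0 ≤ h)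
    (hn₁ : 0 ≤ n₁) (hn₆ : 0 ≤ n₆) (hk : 0 ≤ k) (hC : 0 ≤ C)
    (hgrad : A ≤ k * h * n₂) (hinterp : n₂ ≤ n₁ ^ (2 / 5 : ℝ) * n₆ ^ (3 / 5 : ℝ))
    (hsob : n₆ ≤ C * A ^ (1 / 2 : ℝ)) :
    A ^ (1 / 2 : ℝ) ≤ (k * C ^ (3 / 5 : ℝ)) ^ (5 / 7 : ℝ) * h ^ (5 / 7 : ℝ) * n₁ ^ (2 / 7 : ℝ) := by
  have hsob' : n₆ ^ (3 / 5 : ℝ) ≤ C ^ (3 / 5 : ℝ) * A ^ (3 / 10 : ℝ) := by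
    grw [hsob, mul_rpow hC (by positivity), ← rpow_mul hA]
    norm_num
  have hA' : A ≤ (k * C ^ (3 / 5 : ℝ) * h * n₁ ^ (2 / 5 : ℝ)) * A ^ (3 / 10 : ℝ) := by
    grw [hgrad, hinterp, hsob']
    exact le_of_eq (by ring)
  have h710 := rpow_le_of_le_mul_rpow hA (by positivity) (by norm_num) hA'
  calc A ^ (1 / 2 : ℝ) = (A ^ (1 - 3 / 10 : ℝ)) ^ (5 / 7 : ℝ) := by
        rw [← rpow_mul hA]; norm_num
    _ ≤ (k * C ^ (3 / 5 : ℝ) * h * n₁ ^ (2 / 5 : ℝ)) ^ (5 / 7 : ℝ) := by gcongr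
    _ = _ := by
        rw [mul_rpow (by positivity) (by positivity), mul_rpow (by positivity) hh,
          ← rpow_mul hn₁]
        norm_num

section Holder

variable {α : Type*} [MeasurableSpace α] {μ : Measure α}

theorem integral_mul_le_L2_mul_L2 {f g : α → ℝ}
    (hf : MemLp f 2 μ) (hg : MemLp g 2 μ) :
    ∫ x, f x * g x ∂μ ≤ (∫ x, f x ^ 2 ∂μ) ^ (1 / 2 : ℝ) * (∫ x, g x ^ 2 ∂μ) ^ (1 / 2 : ℝ) := by
  have hfg : ∫ x, f x * g x ∂μ ≤ ∫ x, |f x| * |g x| ∂μ := by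
    simpa only [Real.norm_eq_abs, abs_mul] using
      (le_abs_self _).trans (norm_integral_le_integral_norm (fun x => f x * g x))
  have holder := integral_mul_le_Lp_mul_Lq_of_nonneg (μ := μ) Real.HolderConjugate.two_two
    (Filter.Eventually.of_forall fun x => abs_nonneg (f x))
    (Filter.Eventually.of_forall fun x => abs_nonneg (g x))
    (by rw [ENNReal.ofReal_ofNat]; exact hf.abs) (by rw [ENNReal.ofReal_ofNat]; exact hg.abs)
  simpa only [rpow_two, sq_abs] using hfg.trans holder

theorem integral_sq_rpow_half_le_L1_rpow_mul_L6_rpow {f : α → ℝ}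
    (hf₁ : MemLp f 1 μ) (hf₆ : MemLp f 6 μ) :
    (∫ x, f x ^ 2 ∂μ) ^ (1 / 2 : ℝ) ≤
      (∫ x, |f x| ∂μ) ^ (2 / 5 : ℝ) * ((∫ x, |f x| ^ 6 ∂μ) ^ (1 / 6 : ℝ)) ^ (3 / 5 : ℝ) := by
  have hmem₁ : MemLp (fun x => |f x| ^ (4 / 5 : ℝ)) (ENNReal.ofReal (5 / 4)) μ := by
    convert hf₁.norm_rpow_div (ENNReal.ofReal (4 / 5)) using 1
    · rw [ENNReal.toReal_ofReal (by norm_num)]; simp only [Real.norm_eq_abs]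
    · rw [one_div, ← ENNReal.ofReal_inv_of_pos (by norm_num)]; norm_num
  have hmem₆ : MemLp (fun x => |f x| ^ (6 / 5 : ℝ)) (ENNReal.ofReal 5) μ := by
    convert hf₆.norm_rpow_div (ENNReal.ofReal (6 / 5)) using 1
    · rw [ENNReal.toReal_ofReal (by norm_num)]; simp only [Real.norm_eq_abs]
    · rw [← ENNReal.ofReal_ofNat, ← ENNReal.ofReal_div_of_pos (by norm_num)]; norm_num
  -- Hölder with exponents `5/4` and `5` for `f ^ 2 = |f| ^ (4/5) * |f| ^ (6/5)`
  have holder := integral_mul_le_Lp_mul_Lq_of_nonneg (μ := μ)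
    (Real.holderConjugate_iff.mpr ⟨by norm_num, by norm_num⟩ : Real.HolderConjugate (5 / 4) 5)
    (Filter.Eventually.of_forall fun x => rpow_nonneg (abs_nonneg (f x)) _)
    (Filter.Eventually.of_forall fun x => rpow_nonneg (abs_nonneg (f x)) _) hmem₁ hmem₆
  have hsplit (t : ℝ) : |t| ^ (4 / 5 : ℝ) * |t| ^ (6 / 5 : ℝ) = t ^ 2 := by
    rw [← rpow_add' (abs_nonneg t) (by norm_num)]; norm_num [sq_abs]
  have hpow (t a b : ℝ) : (|t| ^ a) ^ b = |t| ^ (a * b) := (rpow_mul (abs_nonneg t) a b).symm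
  simp only [hsplit, hpow] at holder
  norm_num at holder
  calc (∫ x, f x ^ 2 ∂μ) ^ (1 / 2 : ℝ)
      ≤ ((∫ x, |f x| ∂μ) ^ (4 / 5 : ℝ) * (∫ x, |f x| ^ 6 ∂μ) ^ (1 / 5 : ℝ)) ^ (1 / 2 : ℝ) := by
        gcongr
    _ = _ := by
        rw [mul_rpow (by positivity) (by positivity), ← rpow_mul (by positivity),
          ← rpow_mul (by positivity), ← rpow_mul (by positivity)]
        norm_num

end Holder

theorem norm_gradient_eq_norm_fderiv {E : Type*} [NormedAddCommGroup E] [InnerProductSpace ℝ E]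
    [CompleteSpace E] (u : E → ℝ) (x : E) : ‖gradient u x‖ = ‖fderiv ℝ u x‖ :=
  (InnerProductSpace.toDual ℝ E).symm.norm_map _

theorem integral_fderiv_apply_sq_eq_neg_integral_fderiv_fderiv_apply_mul
    {E : Type*} [NormedAddCommGroup E] [NormedSpace ℝ E] [FiniteDimensional ℝ E]
    [MeasurableSpace E] [BorelSpace E] {μ : Measure E} [μ.IsAddHaarMeasure]
    {u : E → ℝ} (hu : ContDiff ℝ 2 u) (hsupp : HasCompactSupport u) (v : E) :
    ∫ x, fderiv ℝ u x v ^ 2 ∂μ = -∫ x, fderiv ℝ (fun y => fderiv ℝ u y v) x v * u x ∂μ := by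
  have hdu : ContDiff ℝ 1 (fun y => fderiv ℝ u y v) :=
    (hu.fderiv_right (m := 1) le_rfl).clm_apply contDiff_const
  have hddu : Continuous (fun x => fderiv ℝ (fun y => fderiv ℝ u y v) x v) :=
    ((hdu.fderiv_right (m := 0) le_rfl).clm_apply contDiff_const).continuous
  have hsupp' : HasCompactSupport (fun y => fderiv ℝ u y v) := hsupp.fderiv_apply ℝ v
  simp only [sq]
  exact integral_mul_fderiv_eq_neg_fderiv_mul_of_integrable
    ((hddu.mul hu.continuous).integrable_of_hasCompactSupport hsupp.mul_left)
    ((hdu.continuous.mul hdu.continuous).integrable_of_hasCompactSupport hsupp'.mul_left)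
    ((hdu.continuous.mul hu.continuous).integrable_of_hasCompactSupport hsupp.mul_left)
    (fun x _ => (hdu.differentiable one_ne_zero).differentiableAt)
    (fun x _ => (hu.differentiable two_ne_zero).differentiableAt)

theorem exists_integral_norm_rpow_le_mul_integral_norm_fderiv_rpow
    {E F : Type*} [NormedAddCommGroup E] [NormedSpace ℝ E] [FiniteDimensional ℝ E]
    [MeasurableSpace E] [BorelSpace E] (μ : Measure E) [μ.IsAddHaarMeasure]
    [NormedAddCommGroup F] [NormedSpace ℝ F] [FiniteDimensional ℝ F]
    {p p' : ℝ≥0} (hp : 1 ≤ p) (hp'0 : p' ≠ 0) (hn : 0 < finrank ℝ E)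
    (hp' : (p' : ℝ)⁻¹ = p⁻¹ - (finrank ℝ E : ℝ)⁻¹) :
    ∃ C > 0, ∀ u : E → F, ContDiff ℝ 1 u → HasCompactSupport u →
      (∫ x, ‖u x‖ ^ (p' : ℝ) ∂μ) ^ (p' : ℝ)⁻¹ ≤
        C * (∫ x, ‖fderiv ℝ u x‖ ^ (p : ℝ) ∂μ) ^ (p : ℝ)⁻¹ := by
  set C₀ : ℝ≥0 := SNormLESNormFDerivOfEqConst F μ p
  refine ⟨C₀ + 1, by positivity, fun u hu hsupp => ?_⟩
  have hu_mem : MemLp u p' μ := hu.continuous.memLp_of_hasCompactSupport hsupp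
  have hdu_mem : MemLp (fderiv ℝ u) p μ :=
    (hu.continuous_fderiv one_ne_zero).memLp_of_hasCompactSupport (hsupp.fderiv ℝ)
  have gns := eLpNorm_le_eLpNorm_fderiv_of_eq μ hu hsupp hp hn hp'
  rw [hu_mem.eLpNorm_eq_integral_rpow_norm (by exact_mod_cast hp'0) ENNReal.coe_ne_top,
    hdu_mem.eLpNorm_eq_integral_rpow_norm (by exact_mod_cast (zero_lt_one.trans_le hp).ne')
      ENNReal.coe_ne_top,
    ← ENNReal.ofReal_coe_nnreal (p := C₀), ← ENNReal.ofReal_mul (by positivity),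
    ENNReal.ofReal_le_ofReal_iff (by positivity)] at gns
  simp only [ENNReal.coe_toReal] at gns
  refine gns.trans (mul_le_mul_of_nonneg_right (by linarith) (by positivity))

section Euclidean

variable {ι : Type*} [DecidableEq ι]

def partialDeriv (u : EuclideanSpace ℝ ι → ℝ) (i : ι) : EuclideanSpace ℝ ι → ℝ :=
  fun x => fderiv ℝ u x (EuclideanSpace.single i 1)

theorem partialDeriv_eq_gradient_apply [Fintype ι] (u : EuclideanSpace ℝ ι → ℝ) (i : ι)
    (x : EuclideanSpace ℝ ι) : partialDeriv u i x = gradient u x i := by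
  rw [partialDeriv, ← InnerProductSpace.toDual_symm_apply, EuclideanSpace.inner_single_right]
  simp [gradient]

theorem norm_gradient_sq_eq_sum_partialDeriv_sq [Fintype ι] (u : EuclideanSpace ℝ ι → ℝ)
    (x : EuclideanSpace ℝ ι) : ‖gradient u x‖ ^ 2 = ∑ i, partialDeriv u i x ^ 2 := by
  simp [EuclideanSpace.norm_sq_eq, partialDeriv_eq_gradient_apply]

theorem ContDiff.partialDeriv [Fintype ι] {m n : WithTop ℕ∞} {u : EuclideanSpace ℝ ι → ℝ}
    (hu : ContDiff ℝ n u) (hmn : m + 1 ≤ n) (i : ι) : ContDiff ℝ m (partialDeriv u i) :=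
  (hu.fderiv_right hmn).clm_apply contDiff_const

theorem HasCompactSupport.partialDeriv {u : EuclideanSpace ℝ ι → ℝ} (hu : HasCompactSupport u)
    (i : ι) : HasCompactSupport (partialDeriv u i) :=
  hu.fderiv_apply ℝ _

theorem integral_norm_gradient_sq_le [Fintype ι] {u : EuclideanSpace ℝ ι → ℝ} (hu : ContDiff ℝ 2 u)
    (hsupp : HasCompactSupport u) :
    ∫ x, ‖gradient u x‖ ^ 2 ≤ Fintype.card ι *
      (∫ x, ∑ i, ∑ j, partialDeriv (partialDeriv u j) i x ^ 2) ^ (1 / 2 : ℝ) *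
      (∫ x, u x ^ 2) ^ (1 / 2 : ℝ) := by
  have hu₁ (i : ι) : ContDiff ℝ 1 (partialDeriv u i) := hu.partialDeriv (by norm_num) i
  have hL2 (i j : ι) : MemLp (partialDeriv (partialDeriv u j) i) 2 :=
    ((hu₁ j).partialDeriv (m := 0) (by norm_num) i).continuous.memLp_of_hasCompactSupport
      ((hsupp.partialDeriv j).partialDeriv i)
  have hdiag (i : ι) : ∫ x, partialDeriv (partialDeriv u i) i x ^ 2 ≤
      ∫ x, ∑ i, ∑ j, partialDeriv (partialDeriv u j) i x ^ 2 := by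
    refine integral_mono (hL2 i i).integrable_sq
      (integrable_finsetSum _ fun i _ => integrable_finsetSum _ fun j _ => (hL2 i j).integrable_sq)
      fun x => ?_
    calc partialDeriv (partialDeriv u i) i x ^ 2
        ≤ ∑ j, partialDeriv (partialDeriv u j) i x ^ 2 :=
          Finset.single_le_sum (f := fun j => partialDeriv (partialDeriv u j) i x ^ 2)
            (fun _ _ => sq_nonneg _) (Finset.mem_univ i)
      _ ≤ ∑ i, ∑ j, partialDeriv (partialDeriv u j) i x ^ 2 :=
          Finset.single_le_sum (f := fun i => ∑ j, partialDeriv (partialDeriv u j) i x ^ 2)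
            (fun _ _ => Finset.sum_nonneg fun _ _ => sq_nonneg _) (Finset.mem_univ i)
  have hcoord (i : ι) : ∫ x, partialDeriv u i x ^ 2 ≤
      (∫ x, ∑ i, ∑ j, partialDeriv (partialDeriv u j) i x ^ 2) ^ (1 / 2 : ℝ) *
      (∫ x, u x ^ 2) ^ (1 / 2 : ℝ) := by
    have hparts : ∫ x, partialDeriv u i x ^ 2 = -∫ x, partialDeriv (partialDeriv u i) i x * u x :=
      integral_fderiv_apply_sq_eq_neg_integral_fderiv_fderiv_apply_mul hu hsupp _
    rw [hparts, ← integral_neg]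
    simp only [← neg_mul]
    refine (integral_mul_le_L2_mul_L2 (hL2 i i).neg
      (hu.continuous.memLp_of_hasCompactSupport hsupp)).trans ?_
    simp only [Pi.neg_apply, neg_sq]
    gcongr ?_ ^ _ * _
    exact hdiag i
  calc ∫ x, ‖gradient u x‖ ^ 2 = ∑ i, ∫ x, partialDeriv u i x ^ 2 := by
        simp only [norm_gradient_sq_eq_sum_partialDeriv_sq]
        exact integral_finsetSum _ fun i _ =>
          ((hu₁ i).continuous.memLp_of_hasCompactSupport (hsupp.partialDeriv i)).integrable_sq
    _ ≤ _ := by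
        grw [Finset.sum_le_sum fun i _ => hcoord i]
        simp [mul_assoc]

end Euclidean

/-- Interpolation inequality `‖∇u‖_{L²} ≲ ‖∇²u‖_{L²}^{5/7} ‖u‖_{L¹}^{2/7}`, i.e.
`‖∇u‖_{L²} ≲ ‖∇²u‖_{L²}^{θ} ‖u‖_{Ḃ^{-3/2}_{2,∞}}^{1-θ}` with `θ = 5/7` after the critical
embedding `L¹(ℝ³) ↪ Ḃ^{-3/2}_{2,∞}(ℝ³)`; the Hessian is measured in the Frobenius norm. -/
theorem stmt18 : ∃ C > 0, ∀ u : E3 → ℝ, ContDiff ℝ 2 u → HasCompactSupport u →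
    (∫ x : E3, ‖gradient u x‖ ^ 2) ^ ((1 : ℝ) / 2)
      ≤ C * ((∫ x : E3, ∑ i : Fin 3, ∑ j : Fin 3,
              (fderiv ℝ (fun y => fderiv ℝ u y (EuclideanSpace.single j 1)) x
                (EuclideanSpace.single i 1)) ^ 2) ^ ((1 : ℝ) / 2)) ^ ((5 : ℝ) / 7) *
          (∫ x : E3, |u x|) ^ ((2 : ℝ) / 7) := by
  obtain ⟨C, hC, sobolev⟩ := exists_integral_norm_rpow_le_mul_integral_norm_fderiv_rpow
    (volume : Measure E3) (F := ℝ) (p := 2) (p' := 6) (by norm_num) (by norm_num)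
    (by simp) (by simp; norm_num)
  refine ⟨(3 * C ^ (3 / 5 : ℝ)) ^ (5 / 7 : ℝ), by positivity, fun u hu hsupp => ?_⟩
  have hgrad := integral_norm_gradient_sq_le hu hsupp
  have hinterp := integral_sq_rpow_half_le_L1_rpow_mul_L6_rpow
    (hu.continuous.memLp_of_hasCompactSupport (μ := volume) (p := 1) hsupp)
    (hu.continuous.memLp_of_hasCompactSupport (p := 6) hsupp)
  have hsob : (∫ x, |u x| ^ 6) ^ (1 / 6 : ℝ) ≤ C * (∫ x, ‖gradient u x‖ ^ 2) ^ (1 / 2 : ℝ) := by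
    simpa [norm_gradient_eq_norm_fderiv] using sobolev u (hu.of_le one_le_two) hsupp
  simp only [Fintype.card_fin, Nat.cast_ofNat] at hgrad
  exact rpow_half_le_of_interpolation_bounds (by positivity) (by positivity) (by positivity)
    (by positivity) (by norm_num) hC.le hgrad hinterp hsob
end
end
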